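/- arXiv:2011.03373 — 4 statements merged into one kernel-verified Lean document; each statement's English description precedes it below -/
import Mathlib

section
/- (Extension principle.) Let p be a prime and G = PSL(2,𝔽_p). Let h and r ≥ 1 be natural numbers and m₁,…,m_r ≥ 2 integers, and suppose there exist elements α₁,β₁,…,α_h,β_h and c₁,…,c_r of G such that orderOf(c_j) = m_j for every j, the ordered product ⁅α₁,β₁⁆⋯⁅α_h,β_h⁆·c₁⋯c_r equals 1, and all of these elements together generate G. Fix an index i, assume m_i = 2 or m_i is an odd prime, and assume c_i = u·v for some u, v ∈ G with orderOf(u) = orderOf(v) = m_i. Then there exist elements α'₁,β'₁,…,α'_h,β'_h and c'₁,…,c'_{r+1} of G whose orders are m₁,…,m_{i−1}, m_i, m_i, m_{i+1},…,m_r respectively, such that ⁅α'₁,β'₁⁆⋯⁅α'_h,β'_h⁆·c'₁⋯c'_{r+1} = 1 and all of these elements together generate G; that is, (h; m₁,…,m_{i−1}, m_i, m_i, m_{i+1},…, m_r) is also a signature of G. -/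
/-!
Replace `c i` by the two consecutive entries `u, v`. The product `c₁ ⋯ c_r` does not change,
the new elements still generate because `c i = u * v` lies in the subgroup they generate,
and both new entries have order `m i`.
-/

open scoped commutatorElement

theorem Fin.comp_insertNth {α β : Type*} {n : ℕ} (φ : α → β) (j : Fin (n + 1)) (x : α)
    (f : Fin n → α) :
    φ ∘ Fin.insertNth j x f = Fin.insertNth j (φ x) (φ ∘ f) := by
  funext k
  cases k using Fin.succAboveCases j <;> simp

theorem List.ofFn_insertNth {α : Type*} :
    ∀ {n : ℕ} (j : Fin (n + 1)) (x : α) (f : Fin n → α),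
      List.ofFn (Fin.insertNth j x f) = (List.ofFn f).insertIdx j x
  | 0, j, x, f => by
    rw [Fin.fin_one_eq_zero j, Fin.insertNth_zero']
    simp
  | n + 1, j, x, f => by
    cases j using Fin.cases with
    | zero => simp [Fin.insertNth_zero']
    | succ j =>
      rw [← Fin.cons_self_tail f, Fin.insertNth_succ_cons, List.ofFn_cons, List.ofFn_cons,
        Fin.val_succ, List.insertIdx_succ_cons, List.ofFn_insertNth j]

theorem List.ofFn_update {α : Type*} {n : ℕ} (f : Fin n → α) (i : Fin n) (y : α) :
    List.ofFn (Function.update f i y) = (List.ofFn f).set i y := by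
  apply List.ext_getElem (by simp)
  intro k _ _
  simp [List.getElem_set, Function.update_apply, Fin.ext_iff, eq_comm]

theorem List.prod_insertIdx_set {M : Type*} [Monoid M] (x y : M) :
    ∀ {l : List M} {i : ℕ} (hi : i < l.length), l[i] = x * y →
      ((l.set i y).insertIdx i x).prod = l.prod
  | a :: l, 0, _, h => by simp_all [mul_assoc]
  | a :: l, i + 1, hi, h => by
    rw [List.set_cons_succ, List.insertIdx_succ_cons, List.prod_cons, List.prod_cons,
      List.prod_insertIdx_set x y (Nat.lt_of_succ_lt_succ hi) h]

section GeneratingVector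

variable {G : Type*} [Group G] {h r : ℕ}

def IsGeneratingVector (α β : Fin h → G) (c : Fin r → G) : Prop :=
  (List.ofFn fun k => ⁅α k, β k⁆).prod * (List.ofFn c).prod = 1 ∧
    Subgroup.closure (Set.range α ∪ Set.range β ∪ Set.range c) = ⊤

theorem prod_ofFn_insertNth_update {c : Fin r → G} {i : Fin r} {u v : G} (huv : c i = u * v) :
    (List.ofFn (Fin.insertNth i.castSucc u (Function.update c i v))).prod =
      (List.ofFn c).prod := by
  rw [List.ofFn_insertNth, List.ofFn_update, Fin.val_castSucc]
  exact List.prod_insertIdx_set u v (by simp) (by simpa using huv)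

theorem range_subset_closure_range_insertNth_update {c : Fin r → G} {i : Fin r} {u v : G}
    (huv : c i = u * v) :
    Set.range c ⊆
      Subgroup.closure (Set.range (Fin.insertNth i.castSucc u (Function.update c i v))) := by
  rintro _ ⟨j, rfl⟩
  by_cases hj : j = i
  · subst hj
    rw [huv]
    exact mul_mem (Subgroup.subset_closure ⟨j.castSucc, by simp⟩)
      (Subgroup.subset_closure ⟨j.succ, by simp [← Fin.succAbove_castSucc_self]⟩)
  · exact Subgroup.subset_closure ⟨i.castSucc.succAbove j, by simp [hj]⟩

theorem IsGeneratingVector.insertNth_update {α β : Fin h → G} {c : Fin r → G}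
    (hc : IsGeneratingVector α β c) {i : Fin r} {u v : G} (huv : c i = u * v) :
    IsGeneratingVector α β (Fin.insertNth i.castSucc u (Function.update c i v)) := by
  refine ⟨by rw [prod_ofFn_insertNth_update huv, hc.1], eq_top_iff.2 ?_⟩
  rw [← hc.2, Subgroup.closure_le]
  refine Set.union_subset (Set.subset_union_left.trans Subgroup.subset_closure) ?_
  exact (range_subset_closure_range_insertNth_update huv).trans
    (Subgroup.closure_mono Set.subset_union_right)

end GeneratingVector

theorem extension_principle_general (p : ℕ)
    (h r : ℕ) (m : Fin r → ℕ)
    (i : Fin r)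
    (α β : Fin h → Matrix.ProjectiveSpecialLinearGroup (Fin 2) (ZMod p))
    (c : Fin r → Matrix.ProjectiveSpecialLinearGroup (Fin 2) (ZMod p))
    (hord : ∀ j, orderOf (c j) = m j)
    (hprod : (List.ofFn fun k => ⁅α k, β k⁆).prod * (List.ofFn c).prod = 1)
    (hgen : Subgroup.closure (Set.range α ∪ Set.range β ∪ Set.range c) = ⊤)
    (u v : Matrix.ProjectiveSpecialLinearGroup (Fin 2) (ZMod p))
    (huv : c i = u * v) (hu : orderOf u = m i) (hv : orderOf v = m i) :
    ∃ (α' β' : Fin h → Matrix.ProjectiveSpecialLinearGroup (Fin 2) (ZMod p))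
      (c' : Fin (r + 1) → Matrix.ProjectiveSpecialLinearGroup (Fin 2) (ZMod p)),
      (∀ j, orderOf (c' j) = (Fin.insertNth i.castSucc (m i) m : Fin (r + 1) → ℕ) j) ∧
      (List.ofFn fun k => ⁅α' k, β' k⁆).prod * (List.ofFn c').prod = 1 ∧
      Subgroup.closure (Set.range α' ∪ Set.range β' ∪ Set.range c') = ⊤ := by
  have horders : orderOf ∘ Fin.insertNth i.castSucc u (Function.update c i v) =
      Fin.insertNth i.castSucc (m i) m := by
    have hm : orderOf ∘ c = m := funext hord
    rw [Fin.comp_insertNth, Function.comp_update, hm, hu, hv, Function.update_eq_self]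
  have hvec : IsGeneratingVector α β c := ⟨hprod, hgen⟩
  obtain ⟨hprod', hgen'⟩ := hvec.insertNth_update huv
  exact ⟨α, β, _, congrFun horders, hprod', hgen'⟩

/-- **Extension principle.**  Let `G = PSL(2, 𝔽_p)` for a prime `p`.  Suppose `G` has a
generating vector of type `(h; m₁,…,m_r)` (witnessed by `α, β, c`), that `m i = 2` or `m i`
is an odd prime, and that `c i = u * v` with `orderOf u = orderOf v = m i`.  Then `G` also
has a generating vector of type `(h; m₁,…,m_{i-1}, m i, m i, m_{i+1},…,m_r)`, i.e. with the
period `m i` repeated once more (the new tuple of periods being `Fin.insertNth i.castSucc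
(m i) m`). -/
theorem extension_principle (p : ℕ) [Fact p.Prime]
    (h r : ℕ) (hr : 1 ≤ r) (m : Fin r → ℕ) (hm : ∀ j, 2 ≤ m j)
    (i : Fin r) (hmi : m i = 2 ∨ ((m i).Prime ∧ Odd (m i)))
    (α β : Fin h → Matrix.ProjectiveSpecialLinearGroup (Fin 2) (ZMod p))
    (c : Fin r → Matrix.ProjectiveSpecialLinearGroup (Fin 2) (ZMod p))
    (hord : ∀ j, orderOf (c j) = m j)
    (hprod : (List.ofFn fun k => ⁅α k, β k⁆).prod * (List.ofFn c).prod = 1)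
    (hgen : Subgroup.closure (Set.range α ∪ Set.range β ∪ Set.range c) = ⊤)
    (u v : Matrix.ProjectiveSpecialLinearGroup (Fin 2) (ZMod p))
    (huv : c i = u * v) (hu : orderOf u = m i) (hv : orderOf v = m i) :
    ∃ (α' β' : Fin h → Matrix.ProjectiveSpecialLinearGroup (Fin 2) (ZMod p))
      (c' : Fin (r + 1) → Matrix.ProjectiveSpecialLinearGroup (Fin 2) (ZMod p)),
      (∀ j, orderOf (c' j) = (Fin.insertNth i.castSucc (m i) m : Fin (r + 1) → ℕ) j) ∧
      (List.ofFn fun k => ⁅α' k, β' k⁆).prod * (List.ofFn c').prod = 1 ∧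
      Subgroup.closure (Set.range α' ∪ Set.range β' ∪ Set.range c') = ⊤ :=
  extension_principle_general p h r m i α β c hord hprod hgen u v huv hu hv
end

section
/- For every natural number h ≥ 2 and all natural numbers a₂, a₃, a₄, a₇ ≥ 0, the group G = PSL(2,𝔽₇) admits a generating vector of type (h; 2^[a₂], 3^[a₃], 4^[a₄], 7^[a₇]); that is, every tuple (h; 2^[a₂],3^[a₃],4^[a₄],7^[a₇]) with h ≥ 2 is a signature of PSL(2,𝔽₇). -/
open scoped commutatorElement

/-- `GenVector G h periods` says that the group `G` admits a generating vector of type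
`(h; periods)`. -/
def GenVector (G : Type) [Group G] (h : ℕ) (periods : List ℕ) : Prop :=
  ∃ (α β : Fin h → G) (c : Fin periods.length → G),
    (∀ j, orderOf (c j) = periods.get j) ∧
    ((List.ofFn fun i => ⁅α i, β i⁆).prod * (List.ofFn c).prod = 1) ∧
    Subgroup.closure (Set.range α ∪ Set.range β ∪ Set.range c) = ⊤

/-- The period list `2^[a₂], 3^[a₃], 4^[a₄], 7^[a₇]`. -/
def periods7 (a₂ a₃ a₄ a₇ : ℕ) : List ℕ :=
  List.replicate a₂ 2 ++ List.replicate a₃ 3 ++ List.replicate a₄ 4 ++ List.replicate a₇ 7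

/-!
The transvections `T, T'` generate `PSL(2, 𝔽₇)`; placed in the first handle they make the vector
generate. A period `p` occurring `aₚ` times is realised by `x, x⁻¹, x, x⁻¹, …` for a fixed `x` of
order `p`, with product `x ^ (aₚ % 2)`. It remains to write `⁅T, T'⁆⁻¹ * r⁻¹`, where
`r = x₂ ^ ε₂ * x₃ ^ ε₃ * x₄ ^ ε₄ * x₇ ^ ε₇`, as one commutator for the second handle; this is
checked by computation in `SL(2, 𝔽₇)` for the sixteen parity patterns `ε`. Further handles are
trivial.
-/

open scoped MatrixGroups
open Matrix

section Group

variable {G : Type*} [Group G]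

theorem exists_list_map_orderOf_eq_replicate_prod_eq_pow (g : G) (n : ℕ) :
    ∃ l : List G, l.map orderOf = List.replicate n (orderOf g) ∧ l.prod = g ^ (n % 2) := by
  induction n using Nat.twoStepInduction with
  | zero => exact ⟨[], rfl, by simp⟩
  | one => exact ⟨[g], rfl, by simp⟩
  | more n ih _ =>
    obtain ⟨l, hl, hprod⟩ := ih
    exact ⟨g :: g⁻¹ :: l, by simp [hl, List.replicate_succ], by simp [hprod]⟩

theorem mul_commutatorElement_mul_eq_one {k r u v : G} (h : r * k * (u * v) = v * u) :
    k * ⁅u, v⁆ * r = 1 :=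
  calc k * ⁅u, v⁆ * r = r⁻¹ * (r * k * (u * v)) * (v * u)⁻¹ * r := by group
    _ = 1 := by rw [h]; group

theorem Subgroup.notMem_center_of_mul_ne {g a : G} (h : a * g ≠ g * a) : g ∉ center G :=
  fun hg => h (mem_center_iff.mp hg a)

theorem QuotientGroup.orderOf_mk_eq_prime_pow {N : Subgroup G} [N.Normal] {g : G} {p n : ℕ}
    [Fact p.Prime] (hnot : g ^ p ^ n ∉ N) (hmem : g ^ p ^ (n + 1) ∈ N) :
    orderOf (g : G ⧸ N) = p ^ (n + 1) :=
  orderOf_eq_prime_pow (by rwa [← mk_pow, eq_one_iff]) (by rwa [← mk_pow, eq_one_iff])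

end Group

theorem genVector_of_commutator_mul_commutator_mul_prod_eq_one {G : Type} [Group G] {h : ℕ}
    (hh : 2 ≤ h) {a b u v : G} (hab : Subgroup.closure {a, b} = ⊤) (cs : List G)
    (hrel : ⁅a, b⁆ * ⁅u, v⁆ * cs.prod = 1) : GenVector G h (cs.map orderOf) := by
  obtain ⟨k, rfl⟩ := Nat.exists_eq_add_of_le' hh
  refine ⟨Fin.cons a (Fin.cons u 1), Fin.cons b (Fin.cons v 1),
    fun j => cs.get (j.cast (List.length_map _)), fun j => by simp, ?_, ?_⟩
  · have hcs : List.ofFn (fun j : Fin (cs.map orderOf).length =>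
        cs.get (j.cast (List.length_map _))) = cs := by
      rw [List.ofFn_congr (List.length_map _)]
      simp
    simpa [List.ofFn_succ, hcs, mul_assoc] using hrel
  · rw [eq_top_iff, ← hab, Subgroup.closure_le]
    rintro _ (rfl | rfl)
    · exact Subgroup.subset_closure (Or.inl (Or.inl ⟨0, rfl⟩))
    · exact Subgroup.subset_closure (Or.inl (Or.inr ⟨0, rfl⟩))

namespace Matrix.SpecialLinearGroup

theorem transvection_one_pow {ι F : Type*} [DecidableEq ι] [Fintype ι] [CommRing F] {i j : ι}
    (hij : i ≠ j) (n : ℕ) : transvection hij (1 : F) ^ n = transvection hij (n : F) := by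
  induction n with
  | zero => simp [transvection_coeff_zero]
  | succ n ih => rw [pow_succ, ih, ← transvection_add, Nat.cast_succ]

theorem neg_one_mem_center {R : Type*} [CommRing R] :
    (-1 : SL(2, R)) ∈ Subgroup.center SL(2, R) :=
  mem_center_iff.mpr ⟨-1, by norm_num, by ext i j; fin_cases i <;> fin_cases j <;> simp⟩

end Matrix.SpecialLinearGroup

theorem Matrix.ProjectiveSpecialLinearGroup.coe_neg {R : Type*} [CommRing R] (g : SL(2, R)) :
    ((-g : SL(2, R)) : ProjectiveSpecialLinearGroup (Fin 2) R) = g := by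
  rw [← neg_one_mul, QuotientGroup.mk_mul,
    (QuotientGroup.eq_one_iff _).mpr SpecialLinearGroup.neg_one_mem_center, one_mul]

theorem Matrix.SL2.closure_transvection_one_eq_top (p : ℕ) [Fact p.Prime] :
    Subgroup.closure
      {SpecialLinearGroup.transvection (zero_ne_one : (0 : Fin 2) ≠ 1) (1 : ZMod p),
        SpecialLinearGroup.transvection one_ne_zero 1} = ⊤ := by
  refine eq_top_iff.mpr fun A _ => SL2.transvection_induction (· ∈ Subgroup.closure _) ?_
    (fun _ _ => mul_mem) A
  intro i j hij c
  rw [← ZMod.natCast_zmod_val c, ← SpecialLinearGroup.transvection_one_pow]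
  refine pow_mem (Subgroup.subset_closure ?_) _
  fin_cases i <;> fin_cases j
  · exact absurd rfl hij
  · exact Or.inl rfl
  · exact Or.inr rfl
  · exact absurd rfl hij

notation "PSL₂₇" => ProjectiveSpecialLinearGroup (Fin 2) (ZMod 7)

namespace PSL27

instance : Fact (Nat.Prime 7) := ⟨by norm_num⟩

def T : SL(2, ZMod 7) := SpecialLinearGroup.transvection zero_ne_one 1

def T' : SL(2, ZMod 7) := SpecialLinearGroup.transvection one_ne_zero 1

def X : SL(2, ZMod 7) := ⟨!![0, -1; 1, 0], by decide⟩

def Y : SL(2, ZMod 7) := ⟨!![0, -1; 1, -1], by decide⟩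

def Z : SL(2, ZMod 7) := ⟨!![0, -1; 1, 3], by decide⟩

theorem closure_T_T' : Subgroup.closure {(T : PSL₂₇), (T' : PSL₂₇)} = ⊤ := by
  have h := congrArg (Subgroup.map (QuotientGroup.mk' (Subgroup.center SL(2, ZMod 7))))
    (SL2.closure_transvection_one_eq_top 7)
  rwa [MonoidHom.map_closure, Set.image_pair,
    Subgroup.map_top_of_surjective _ (QuotientGroup.mk'_surjective _)] at h

theorem orderOf_X : orderOf (X : PSL₂₇) = 2 :=
  QuotientGroup.orderOf_mk_eq_prime_pow (p := 2) (n := 0)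
    (Subgroup.notMem_center_of_mul_ne (a := T) (by decide))
    (by rw [show X ^ 2 ^ (0 + 1) = -1 by decide]; exact SpecialLinearGroup.neg_one_mem_center)

theorem orderOf_Y : orderOf (Y : PSL₂₇) = 3 :=
  QuotientGroup.orderOf_mk_eq_prime_pow (p := 3) (n := 0)
    (Subgroup.notMem_center_of_mul_ne (a := T) (by decide))
    (by rw [show Y ^ 3 ^ (0 + 1) = 1 by decide]; exact one_mem _)

theorem orderOf_Z : orderOf (Z : PSL₂₇) = 4 :=
  QuotientGroup.orderOf_mk_eq_prime_pow (p := 2) (n := 1)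
    (Subgroup.notMem_center_of_mul_ne (a := T) (by decide))
    (by rw [show Z ^ 2 ^ (1 + 1) = -1 by decide]; exact SpecialLinearGroup.neg_one_mem_center)

theorem orderOf_T : orderOf (T : PSL₂₇) = 7 :=
  QuotientGroup.orderOf_mk_eq_prime_pow (p := 7) (n := 0)
    (Subgroup.notMem_center_of_mul_ne (a := T') (by decide))
    (by rw [show T ^ 7 ^ (0 + 1) = 1 by decide]; exact one_mem _)

theorem commutator_T_T' : ⁅T, T'⁆ = T * T' * T ^ 6 * T' ^ 6 := by
  rw [commutatorElement_def, inv_eq_of_mul_eq_one_right (a := T) (b := T ^ 6) (by decide),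
    inv_eq_of_mul_eq_one_right (a := T') (b := T' ^ 6) (by decide)]

-- Found by computer search.
def commutatorWitnesses : List SL(2, ZMod 7) :=
  [⟨!![-1, 0; -2, -1], by decide⟩, ⟨!![-2, -2; 3, -1], by decide⟩,
    ⟨!![-1, -2; -1, -3], by decide⟩, ⟨!![-3, 0; 1, 2], by decide⟩,
    ⟨!![-2, 0; -2, 3], by decide⟩, ⟨!![3, -2; 0, -2], by decide⟩, ⟨!![0, -3; -2, 1], by decide⟩]

-- The inverse-free form of `⁅T, T'⁆ * ⁅u, v⁆ * r = ±1` (see `mul_commutatorElement_mul_eq_one`):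
-- `decide` cannot afford the adjugate behind `⁻¹` in `SL(2, ZMod 7)`.
set_option synthInstance.maxSize 1024 in
theorem exists_mem_commutatorWitnesses : ∀ i < 2, ∀ j < 2, ∀ k < 2, ∀ l < 2,
    ∃ u ∈ commutatorWitnesses, ∃ v ∈ commutatorWitnesses,
      X ^ i * Y ^ j * Z ^ k * T ^ l * ⁅T, T'⁆ * (u * v) ∈ [v * u, -(v * u)] := by
  rw [commutator_T_T']
  decide

theorem exists_commutator_mul_eq_one {i j k l : ℕ} (hi : i < 2) (hj : j < 2) (hk : k < 2)
    (hl : l < 2) : ∃ u v : PSL₂₇, ⁅(T : PSL₂₇), (T' : PSL₂₇)⁆ * ⁅u, v⁆ *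
      ((X : PSL₂₇) ^ i * (Y : PSL₂₇) ^ j * (Z : PSL₂₇) ^ k * (T : PSL₂₇) ^ l) = 1 := by
  obtain ⟨u, -, v, -, huv⟩ := exists_mem_commutatorWitnesses i hi j hj k hk l hl
  refine ⟨u, v, mul_commutatorElement_mul_eq_one ?_⟩
  have h : ((X ^ i * Y ^ j * Z ^ k * T ^ l * ⁅T, T'⁆ * (u * v) : SL(2, ZMod 7)) : PSL₂₇) =
      ((v * u : SL(2, ZMod 7)) : PSL₂₇) := by
    rcases List.mem_pair.mp huv with h | h <;> rw [h]
    exact ProjectiveSpecialLinearGroup.coe_neg _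
  simpa [commutatorElement_def] using h

end PSL27

open PSL27 in
theorem higher_genus_signatures_PSL2_F7 (h a₂ a₃ a₄ a₇ : ℕ) (hh : 2 ≤ h) :
    GenVector (Matrix.ProjectiveSpecialLinearGroup (Fin 2) (ZMod 7)) h
      (periods7 a₂ a₃ a₄ a₇) := by
  obtain ⟨l₂, hl₂, hp₂⟩ := exists_list_map_orderOf_eq_replicate_prod_eq_pow (X : PSL₂₇) a₂
  obtain ⟨l₃, hl₃, hp₃⟩ := exists_list_map_orderOf_eq_replicate_prod_eq_pow (Y : PSL₂₇) a₃
  obtain ⟨l₄, hl₄, hp₄⟩ := exists_list_map_orderOf_eq_replicate_prod_eq_pow (Z : PSL₂₇) a₄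
  obtain ⟨l₇, hl₇, hp₇⟩ := exists_list_map_orderOf_eq_replicate_prod_eq_pow (T : PSL₂₇) a₇
  obtain ⟨u, v, huv⟩ := exists_commutator_mul_eq_one (a₂.mod_lt two_pos) (a₃.mod_lt two_pos)
    (a₄.mod_lt two_pos) (a₇.mod_lt two_pos)
  have hgen := genVector_of_commutator_mul_commutator_mul_prod_eq_one hh closure_T_T'
    (l₂ ++ l₃ ++ l₄ ++ l₇) (by simpa only [List.prod_append, hp₂, hp₃, hp₄, hp₇] using huv)
  simpa only [List.map_append, hl₂, hl₃, hl₄, hl₇, orderOf_X, orderOf_Y, orderOf_Z, orderOf_T,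
    periods7] using hgen
end

section
/- For every natural number h ≥ 2 and all natural numbers a₂, a₃, a₅, a₆, a₁₁ ≥ 0, the group G = PSL(2,𝔽₁₁) admits a generating vector of type (h; 2^[a₂], 3^[a₃], 5^[a₅], 6^[a₆], 11^[a₁₁]); that is, every tuple (h; 2^[a₂],3^[a₃],5^[a₅],6^[a₆],11^[a₁₁]) with h ≥ 2 is a signature of PSL(2,𝔽₁₁). -/
open scoped commutatorElement

/-- The period list `2^[a₂], 3^[a₃], 5^[a₅], 6^[a₆], 11^[a₁₁]`. -/
def periods11 (a₂ a₃ a₅ a₆ a₁₁ : ℕ) : List ℕ :=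
  List.replicate a₂ 2 ++ List.replicate a₃ 3 ++ List.replicate a₅ 5 ++
    List.replicate a₆ 6 ++ List.replicate a₁₁ 11

/-!
Every element of `PSL(2, K)` is a commutator as soon as `K` has an element `a ≠ 0` with `a² ≠ 1`:
a non-central `A ∈ SL(2, K)` is conjugate under `GL(2, K)` to every non-central matrix of the same
trace (both are conjugate to the companion matrix of `X² - tr A • X + 1`), conjugation by
`GL(2, K)` preserves `SL(2, K)` and its commutators, and the commutators `⁅diag(a, a⁻¹), Y⁆`
realise every trace by a non-central matrix.

So for `PSL(2, 𝔽₁₁)` the first handle can carry the two elementary transvections (which generate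
the group), the remaining generators can be any elements of the prescribed orders, and the second
handle is a commutator cancelling the product of all the others.
-/

open scoped MatrixGroups

lemma QuotientGroup.orderOf_mk_eq_prime {G : Type*} [Group G] {N : Subgroup G} [N.Normal]
    {p : ℕ} [Fact p.Prime] {g : G} (hp : g ^ p ∈ N) (hg : g ∉ N) :
    orderOf (g : G ⧸ N) = p :=
  orderOf_eq_prime (by rwa [← QuotientGroup.mk_pow, QuotientGroup.eq_one_iff])
    (by rwa [Ne, QuotientGroup.eq_one_iff])

lemma genVector_of_forall_eq_commutator {G : Type} [Group G] {h : ℕ} (hh : 2 ≤ h) {a b : G}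
    (hab : Subgroup.closure {a, b} = ⊤) (hcomm : ∀ g : G, ∃ x y : G, ⁅x, y⁆ = g)
    {periods : List ℕ} (hper : ∀ n ∈ periods, ∃ g : G, orderOf g = n) :
    GenVector G h periods := by
  obtain ⟨k, rfl⟩ : ∃ k, h = k + 2 := ⟨h - 2, by omega⟩
  choose! f hf using hper
  set c : Fin periods.length → G := fun j => f (periods.get j)
  obtain ⟨x, y, hxy⟩ := hcomm ((List.ofFn c).prod * ⁅a, b⁆)⁻¹
  refine ⟨Fin.cons a (Fin.cons x 1), Fin.cons b (Fin.cons y 1), c,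
    fun j => hf _ (List.get_mem _ _), ?_, ?_⟩
  · simp only [List.ofFn_succ, List.prod_cons, Fin.cons_zero, Fin.cons_succ, Pi.one_apply,
      commutatorElement_self, List.ofFn_const, List.prod_replicate, one_pow, mul_one, hxy]
    group
  · rw [eq_top_iff, ← hab]
    apply Subgroup.closure_mono
    rintro g (rfl | rfl)
    · exact Or.inl (Or.inl ⟨0, rfl⟩)
    · exact Or.inl (Or.inr ⟨0, rfl⟩)

namespace Matrix

variable {K : Type*} [Field K]

lemma exists_mul_eq_mul_companion (A : Matrix (Fin 2) (Fin 2) K)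
    (hA : ∀ r : K, A ≠ scalar (Fin 2) r) :
    ∃ P : GL (Fin 2) K, A * P = P * !![0, -A.det; 1, A.trace] := by
  obtain ⟨a, b, c, d, rfl⟩ : ∃ a b c d, A = !![a, b; c, d] := ⟨_, _, _, _, eta_fin_two A⟩
  -- `P` has columns `v` and `A v` for a vector `v` that is not an eigenvector of `A`.
  suffices ∃ P : Matrix (Fin 2) (Fin 2) K, P.det ≠ 0 ∧
      !![a, b; c, d] * P = P * !![0, -(a * d - b * c); 1, a + d] by
    obtain ⟨P, hP, h⟩ := this
    exact ⟨GeneralLinearGroup.mkOfDetNeZero P hP,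
      by simpa [det_fin_two_of, trace_fin_two_of] using h⟩
  by_cases hc : c = 0
  · by_cases hb : b = 0
    · have had : d - a ≠ 0 := fun h => hA a (by
        ext i j; fin_cases i <;> fin_cases j <;> simp [hb, hc, sub_eq_zero.mp h])
      refine ⟨!![1, a; 1, d], by simpa [det_fin_two_of] using had, ?_⟩
      ext i j; fin_cases i <;> fin_cases j <;> simp [hb, hc] <;> ring
    · refine ⟨!![0, b; 1, d], by simpa [det_fin_two_of] using hb, ?_⟩
      ext i j; fin_cases i <;> fin_cases j <;> simp [hc] <;> ring
  · refine ⟨!![1, a; 0, c], by simpa [det_fin_two_of] using hc, ?_⟩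
    ext i j; fin_cases i <;> fin_cases j <;> simp <;> ring

namespace SpecialLinearGroup

section conjGL

variable {n R : Type*} [Fintype n] [DecidableEq n] [CommRing R]

def conjGL (g : GL n R) : SpecialLinearGroup n R →* SpecialLinearGroup n R where
  toFun A := ⟨g * A * (g⁻¹ : GL n R), by
    rw [det_mul, det_mul, A.det_coe, mul_one, ← det_mul, Units.mul_inv, det_one]⟩
  map_one' := Subtype.ext <| by simp
  map_mul' A B := Subtype.ext <| by
    change _ = (g * A * (g⁻¹ : GL n R)) * (g * B * (g⁻¹ : GL n R) : Matrix n n R)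
    simp only [coe_mul, Matrix.mul_assoc, Units.inv_mul_cancel_left]

@[simp]
lemma coe_conjGL (g : GL n R) (A : SpecialLinearGroup n R) :
    (conjGL g A : Matrix n n R) = g * A * (g⁻¹ : GL n R) := rfl

end conjGL

lemma coe_ne_scalar_of_notMem_center {A : SL(2, K)} (hA : A ∉ Subgroup.center SL(2, K))
    (r : K) : (A : Matrix (Fin 2) (Fin 2) K) ≠ scalar (Fin 2) r := by
  intro h
  refine hA (mem_center_iff.mpr ⟨r, ?_, h.symm⟩)
  simpa [h] using A.det_coe

lemma exists_conjGL_eq_of_trace_eq {A B : SL(2, K)} (hA : A ∉ Subgroup.center SL(2, K))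
    (hB : B ∉ Subgroup.center SL(2, K))
    (h : (A : Matrix (Fin 2) (Fin 2) K).trace = (B : Matrix (Fin 2) (Fin 2) K).trace) :
    ∃ g : GL (Fin 2) K, conjGL g B = A := by
  obtain ⟨P, hP⟩ := exists_mul_eq_mul_companion _ (coe_ne_scalar_of_notMem_center hA)
  obtain ⟨Q, hQ⟩ := exists_mul_eq_mul_companion _ (coe_ne_scalar_of_notMem_center hB)
  rw [det_coe, h] at hP
  rw [det_coe] at hQ
  set C : Matrix (Fin 2) (Fin 2) K := !![0, -1; 1, (B : Matrix (Fin 2) (Fin 2) K).trace]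
  have hC : ((Q⁻¹ : GL (Fin 2) K) : Matrix (Fin 2) (Fin 2) K) * B * Q = C := by
    rw [Matrix.mul_assoc, hQ, ← Matrix.mul_assoc, Units.inv_mul, Matrix.one_mul]
  have hPC : (A : Matrix (Fin 2) (Fin 2) K) = P * C * (P⁻¹ : GL (Fin 2) K) := by
    rw [← hP, Matrix.mul_assoc, Units.mul_inv, Matrix.mul_one]
  refine ⟨P * Q⁻¹, Subtype.ext ?_⟩
  rw [coe_conjGL, hPC, ← hC]
  simp only [Units.val_mul, _root_.mul_inv_rev, inv_inv, Matrix.mul_assoc]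

lemma coe_commutator_diag2 {a : K} (ha : a ≠ 0) (c : K) :
    ((⁅diag2 a ha, transvection one_ne_zero c * transvection zero_ne_one 1⁆ : SL(2, K)) :
      Matrix (Fin 2) (Fin 2) K) =
      !![1 + c - a ^ 2 * c, a ^ 2 - 1; c * (1 + c) * (a⁻¹ ^ 2 - 1), 1 + c - c * a⁻¹ ^ 2] := by
  have hY : ((transvection one_ne_zero c * transvection zero_ne_one 1 : SL(2, K)) :
      Matrix (Fin 2) (Fin 2) K) = !![1, 1; c, 1 + c] := by
    ext i j
    fin_cases i <;> fin_cases j <;>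
      simp [transvection_coe, Matrix.mul_apply, Fin.sum_univ_two, add_comm]
  simp only [commutatorElement_def, coe_mul, coe_inv, hY, diag2_coe', adjugate_fin_two_of,
    mul_fin_two]
  ext i j
  fin_cases i <;> fin_cases j <;> simp <;> field_simp <;> ring

lemma exists_commutator_eq_of_notMem_center {a : K} (ha : a ≠ 0) (hasq : a ^ 2 ≠ 1)
    {A : SL(2, K)} (hA : A ∉ Subgroup.center SL(2, K)) :
    ∃ X Y : SL(2, K), ⁅X, Y⁆ = A := by
  have hsub : a - a⁻¹ ≠ 0 := by
    intro h
    apply hasq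
    field_simp at h
    linear_combination h
  obtain ⟨c, hc⟩ : ∃ c, c * (a - a⁻¹) ^ 2 = 2 - (A : Matrix (Fin 2) (Fin 2) K).trace :=
    ⟨_, div_mul_cancel₀ _ (pow_ne_zero 2 hsub)⟩
  set Y : SL(2, K) := transvection one_ne_zero c * transvection zero_ne_one 1
  set B := ⁅diag2 a ha, Y⁆
  have hB : B ∉ Subgroup.center SL(2, K) := by
    intro hB
    have h01 := congr_fun (congr_fun (scalar_eq_self_of_mem_center hB 0) 0) 1
    rw [scalar_apply, diagonal_apply_ne _ zero_ne_one, coe_commutator_diag2] at h01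
    exact hasq (sub_eq_zero.mp (by simpa using h01.symm))
  have htr : (A : Matrix (Fin 2) (Fin 2) K).trace = (B : Matrix (Fin 2) (Fin 2) K).trace := by
    rw [coe_commutator_diag2, trace_fin_two_of]
    linear_combination hc + 2 * c * mul_inv_cancel₀ ha
  obtain ⟨g, hg⟩ := exists_conjGL_eq_of_trace_eq hA hB htr
  exact ⟨conjGL g (diag2 a ha), conjGL g Y, by rw [← map_commutatorElement, hg]⟩

lemma transvection_pow {ι : Type*} [Fintype ι] [DecidableEq ι] {i j : ι} (hij : i ≠ j) (b : K)
    (n : ℕ) : transvection hij b ^ n = transvection hij (n * b) := by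
  induction n with
  | zero => simp [transvection_coeff_zero]
  | succ n ih => rw [pow_succ, ih, ← transvection_add, Nat.cast_succ, add_one_mul]

lemma closure_transvection_one_eq_top (p : ℕ) [Fact p.Prime] :
    Subgroup.closure ({transvection zero_ne_one 1, transvection one_ne_zero 1} :
      Set SL(2, ZMod p)) = ⊤ := by
  refine eq_top_iff.mpr fun A _ => SL2.transvection_induction _ (fun i j hij c => ?_)
    (fun _ _ => mul_mem) A
  have hgen : transvection hij 1 ∈ Subgroup.closure ({transvection zero_ne_one 1,
      transvection one_ne_zero 1} : Set SL(2, ZMod p)) := by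
    apply Subgroup.subset_closure
    fin_cases i <;> fin_cases j <;> simp at hij ⊢
  simpa [transvection_pow] using pow_mem hgen c.val

end SpecialLinearGroup

namespace ProjectiveSpecialLinearGroup

theorem exists_commutator_eq {a : K} (ha : a ≠ 0) (hasq : a ^ 2 ≠ 1) (g : PSL(2, K)) :
    ∃ x y : PSL(2, K), ⁅x, y⁆ = g := by
  induction g using QuotientGroup.induction_on with | H A => ?_
  by_cases hA : A ∈ Subgroup.center SL(2, K)
  · exact ⟨1, 1, by rw [commutatorElement_self, eq_comm, QuotientGroup.eq_one_iff]; exact hA⟩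
  · obtain ⟨X, Y, rfl⟩ := SpecialLinearGroup.exists_commutator_eq_of_notMem_center ha hasq hA
    exact ⟨X, Y, (map_commutatorElement (QuotientGroup.mk' _) X Y).symm⟩

lemma orderOf_mk_transvection {ι : Type*} [Fintype ι] [DecidableEq ι] (p : ℕ) [Fact p.Prime]
    [CharP K p] {i j : ι} (hij : i ≠ j) {b : K} (hb : b ≠ 0) :
    orderOf (SpecialLinearGroup.transvection hij b : ProjectiveSpecialLinearGroup ι K) = p :=
  QuotientGroup.orderOf_mk_eq_prime
    (by rw [SpecialLinearGroup.transvection_pow, CharP.cast_eq_zero, zero_mul,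
      SpecialLinearGroup.transvection_coeff_zero]; exact one_mem _)
    (by rwa [SpecialLinearGroup.transvection_mem_center_iff])

lemma closure_transvection_one_eq_top (p : ℕ) [Fact p.Prime] :
    Subgroup.closure
      {((SpecialLinearGroup.transvection zero_ne_one 1 : SL(2, ZMod p)) : PSL(2, ZMod p)),
        ((SpecialLinearGroup.transvection one_ne_zero 1 : SL(2, ZMod p)) : PSL(2, ZMod p))} =
      ⊤ := by
  have := MonoidHom.map_closure (QuotientGroup.mk' (Subgroup.center SL(2, ZMod p)))
      {SpecialLinearGroup.transvection zero_ne_one 1, SpecialLinearGroup.transvection one_ne_zero 1}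
  rwa [SpecialLinearGroup.closure_transvection_one_eq_top,
    Subgroup.map_top_of_surjective _ (QuotientGroup.mk'_surjective _), Set.image_pair,
    eq_comm] at this

end ProjectiveSpecialLinearGroup

end Matrix

instance : Fact (Nat.Prime 11) := ⟨by norm_num⟩

namespace PSL2F11

open Matrix Matrix.SpecialLinearGroup

-- The roots of `X² - 5X + 1` are primitive 12th roots of unity in `𝔽₁₂₁`, so the image of this
-- matrix in `PSL(2, 𝔽₁₁)` has order 6.
def nonsplitTorusGen : SL(2, ZMod 11) := ⟨!![0, 10; 1, 5], by decide⟩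

-- `2` generates `𝔽₁₁ˣ`, so the image of `diag(2, 2⁻¹)` in `PSL(2, 𝔽₁₁)` has order 5.
def splitTorusGen : SL(2, ZMod 11) := ⟨!![2, 0; 0, 6], by decide⟩

lemma exists_orderOf_eq {n : ℕ} (hn : n = 2 ∨ n = 3 ∨ n = 5 ∨ n = 6 ∨ n = 11) :
    ∃ g : PSL(2, ZMod 11), orderOf g = n := by
  have : Fact (Nat.Prime 5) := ⟨by norm_num⟩
  set v : PSL(2, ZMod 11) := ↑nonsplitTorusGen
  have h2 : orderOf (v ^ 3) = 2 := by
    rw [← QuotientGroup.mk_pow]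
    exact QuotientGroup.orderOf_mk_eq_prime (by rw [← pow_mul, mem_center_iff]; decide)
      (by rw [mem_center_iff]; decide)
  have h3 : orderOf (v ^ 2) = 3 := by
    rw [← QuotientGroup.mk_pow]
    exact QuotientGroup.orderOf_mk_eq_prime (by rw [← pow_mul, mem_center_iff]; decide)
      (by rw [mem_center_iff]; decide)
  rcases hn with rfl | rfl | rfl | rfl | rfl
  · exact ⟨_, h2⟩
  · exact ⟨_, h3⟩
  · exact ⟨splitTorusGen, QuotientGroup.orderOf_mk_eq_prime (by rw [mem_center_iff]; decide)
      (by rw [mem_center_iff]; decide)⟩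
  · refine ⟨v ^ 3 * v ^ 2, ?_⟩
    rw [(Commute.pow_pow_self v 3 2).orderOf_mul_eq_mul_orderOf_of_coprime
      (by rw [h2, h3]; decide), h2, h3]
  · exact ⟨((transvection zero_ne_one 1 : SL(2, ZMod 11)) : PSL(2, ZMod 11)),
      ProjectiveSpecialLinearGroup.orderOf_mk_transvection 11 _ one_ne_zero⟩

end PSL2F11

lemma mem_periods11 {a₂ a₃ a₅ a₆ a₁₁ n : ℕ} (hn : n ∈ periods11 a₂ a₃ a₅ a₆ a₁₁) :
    n = 2 ∨ n = 3 ∨ n = 5 ∨ n = 6 ∨ n = 11 := by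
  simp only [periods11, List.mem_append, List.mem_replicate] at hn
  omega

theorem higher_genus_signatures_PSL2_F11 (h a₂ a₃ a₅ a₆ a₁₁ : ℕ) (hh : 2 ≤ h) :
    GenVector (Matrix.ProjectiveSpecialLinearGroup (Fin 2) (ZMod 11)) h
      (periods11 a₂ a₃ a₅ a₆ a₁₁) :=
  genVector_of_forall_eq_commutator hh
    (Matrix.ProjectiveSpecialLinearGroup.closure_transvection_one_eq_top 11)
    (Matrix.ProjectiveSpecialLinearGroup.exists_commutator_eq (a := (2 : ZMod 11)) (by decide)
      (by decide))
    fun _ hn => PSL2F11.exists_orderOf_eq (mem_periods11 hn)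
end

section
/- There exist elements x₁, x₂, x₃, x₄, x₅ of PSL(2,𝔽₁₁), each of order exactly 2, with ordered product x₁·x₂·x₃·x₄·x₅ = 1 and such that {x₁, x₂, x₃, x₄, x₅} generates PSL(2,𝔽₁₁); that is, (0; 2, 2, 2, 2, 2) is a signature of PSL(2,𝔽₁₁) (contrary to an earlier claim in the literature). -/
/-!
Lift to `SL(2, 𝔽₁₁)`: a trace-zero matrix squares to `-1`, so its image in `PSL(2, 𝔽₁₁)` is an
involution, and five such matrices with product `1` are exhibited. For generation, the subgroup
`H` they generate contains elements of orders `3`, `5` and `11`, so `165 ∣ |H|` and `[G : H] ∣ 4`.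
As `PSL(2, 𝔽₁₁)` is simple, its action on `G ⧸ H` is faithful unless `H = G`, which would force
`660 ∣ [G : H]!`.
-/

open Matrix Subgroup
open scoped MatrixGroups Nat

theorem Subgroup.eq_top_of_factorial_index_lt_card {G : Type*} [Group G] [IsSimpleGroup G]
    (H : Subgroup G) (h : H.index ! < Nat.card G) : H = ⊤ := by
  have : Finite G := Nat.finite_of_card_ne_zero (by omega)
  rcases IsSimpleGroup.eq_bot_or_eq_top_of_normal _ H.normalCore_normal with hbot | htop
  · have hdvd : H.normalCore.index ∣ H.index ! := by
      rw [normalCore_eq_ker, index_ker, index_eq_card, ← Nat.card_perm]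
      exact card_subgroup_dvd_card _
    rw [hbot, index_bot] at hdvd
    exact absurd (Nat.le_of_dvd (Nat.factorial_pos _) hdvd) (by omega)
  · exact top_le_iff.mp (htop ▸ H.normalCore_le)

theorem Subgroup.eq_top_of_orderOf_eq_three_five_eleven {G : Type*} [Group G] [IsSimpleGroup G]
    (hG : Nat.card G = 660) (H : Subgroup G) {a b c : G} (ha : a ∈ H) (hb : b ∈ H) (hc : c ∈ H)
    (ha3 : orderOf a = 3) (hb5 : orderOf b = 5) (hc11 : orderOf c = 11) : H = ⊤ := by
  have h15 : 3 * 5 ∣ Nat.card H := Nat.Coprime.mul_dvd_of_dvd_of_dvd (by norm_num)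
    (ha3 ▸ H.orderOf_dvd_natCard ha) (hb5 ▸ H.orderOf_dvd_natCard hb)
  have h165 : 3 * 5 * 11 ∣ Nat.card H := Nat.Coprime.mul_dvd_of_dvd_of_dvd (by norm_num)
    h15 (hc11 ▸ H.orderOf_dvd_natCard hc)
  have hindex : H.index ∣ 4 := by
    refine Nat.dvd_of_mul_dvd_mul_left (by norm_num : 0 < 165) ?_
    rw [show 165 * 4 = Nat.card H * H.index by rw [card_mul_index, hG]]
    exact mul_dvd_mul_right h165 H.index
  refine H.eq_top_of_factorial_index_lt_card (lt_of_le_of_lt (Nat.factorial_le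
    (Nat.le_of_dvd (by norm_num) hindex)) ?_)
  rw [hG]
  decide

namespace Matrix

theorem SpecialLinearGroup.mem_center_iff_eq_one_or_eq_neg_one {R : Type*} [CommRing R]
    [NoZeroDivisors R] {A : SL(2, R)} : A ∈ center SL(2, R) ↔ A = 1 ∨ A = -1 := by
  rw [SpecialLinearGroup.mem_center_iff, Fintype.card_fin]
  constructor
  · rintro ⟨r, hr, hA⟩
    rcases sq_eq_one_iff.mp hr with rfl | rfl
    · exact .inl (Subtype.ext (by rw [← hA, map_one, SpecialLinearGroup.coe_one]))
    · exact .inr (Subtype.ext (by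
        rw [← hA, map_neg, map_one, SpecialLinearGroup.coe_neg, SpecialLinearGroup.coe_one]))
  · rintro (rfl | rfl)
    · exact ⟨1, one_pow 2, by rw [map_one, SpecialLinearGroup.coe_one]⟩
    · exact ⟨-1, by norm_num, by
        rw [map_neg, map_one, SpecialLinearGroup.coe_neg, SpecialLinearGroup.coe_one]⟩

namespace ProjectiveSpecialLinearGroup

variable {R : Type*} [CommRing R] [NoZeroDivisors R]

theorem mk_eq_one_iff {A : SL(2, R)} :
    (QuotientGroup.mk A : PSL(2, R)) = 1 ↔ A = 1 ∨ A = -1 :=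
  (QuotientGroup.eq_one_iff A).trans SpecialLinearGroup.mem_center_iff_eq_one_or_eq_neg_one

theorem orderOf_mk_eq_prime {p : ℕ} (hp : p.Prime) {A : SL(2, R)}
    (hpow : A ^ p = 1 ∨ A ^ p = -1) (hA : ¬(A = 1 ∨ A = -1)) :
    orderOf (QuotientGroup.mk A : PSL(2, R)) = p :=
  have : Fact p.Prime := ⟨hp⟩
  orderOf_eq_prime (by rwa [← QuotientGroup.mk_pow, mk_eq_one_iff]) (mt mk_eq_one_iff.mp hA)

end ProjectiveSpecialLinearGroup

variable {F : Type*} [Field F]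

theorem card_SL_mul_card_units {n : Type*} [Fintype n] [DecidableEq n] [Nonempty n] :
    Nat.card (SpecialLinearGroup n F) * Nat.card Fˣ = Nat.card (GL n F) := by
  have hdet : (GeneralLinearGroup.det : GL n F →* Fˣ).range = ⊤ :=
    MonoidHom.range_eq_top.mpr GeneralLinearGroup.det_surjective
  have hSL : (SpecialLinearGroup.toGL : SpecialLinearGroup n F →* GL n F).range =
      GeneralLinearGroup.det.ker := SetLike.coe_injective <| by
    rw [MonoidHom.coe_range, SpecialLinearGroup.range_toGL, MonoidHom.coe_ker]
  rw [← card_mul_index GeneralLinearGroup.det.ker, index_ker, hdet, card_top, ← hSL,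
    Nat.card_congr (MonoidHom.ofInjective SpecialLinearGroup.toGL_injective).toEquiv]

theorem card_center_SL_two (hF : ringChar F ≠ 2) : Nat.card (center SL(2, F)) = 2 := by
  rw [Nat.card_congr SpecialLinearGroup.center_equiv_rootsOfUnity.toEquiv, Fintype.card_fin]
  exact (IsPrimitiveRoot.neg_one (ringChar F) hF).card_rootsOfUnity

theorem card_PSL_two [Fintype F] (hF : ringChar F ≠ 2) :
    Nat.card PSL(2, F) * 2 = Fintype.card F * (Fintype.card F ^ 2 - 1) := by
  have hq : 0 < Fintype.card F - 1 := Nat.sub_pos_of_lt Fintype.one_lt_card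
  have hSL : Nat.card SL(2, F) * (Fintype.card F - 1) =
      Fintype.card F * (Fintype.card F ^ 2 - 1) * (Fintype.card F - 1) := by
    rw [← Nat.card_eq_fintype_card, ← Nat.card_units, card_SL_mul_card_units, card_GL_field,
      Fin.prod_univ_two, Nat.card_units, Nat.card_eq_fintype_card]
    simp only [Fin.val_zero, Fin.val_one, pow_zero, pow_one]
    rw [sq, ← Nat.mul_sub_one, ← sq]
    ring
  have hLagrange := card_eq_card_quotient_mul_card_subgroup (center SL(2, F))
  rw [card_center_SL_two hF] at hLagrange
  exact Nat.eq_of_mul_eq_mul_right hq (hLagrange ▸ hSL)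

end Matrix

instance fact_prime_eleven : Fact (Nat.Prime 11) := ⟨by norm_num⟩

theorem card_PSL_two_zmod_eleven : Nat.card PSL(2, ZMod 11) = 660 := by
  have h := card_PSL_two (F := ZMod 11) (by rw [ZMod.ringChar_zmod_n]; decide)
  rw [ZMod.card] at h
  omega

namespace PSL2F11

def A₁ : SL(2, ZMod 11) := ⟨!![10, 8; 8, 1], by decide⟩
def A₂ : SL(2, ZMod 11) := ⟨!![6, 1; 7, 5], by decide⟩
def A₃ : SL(2, ZMod 11) := ⟨!![3, 4; 3, 8], by decide⟩
def A₄ : SL(2, ZMod 11) := ⟨!![7, 1; 5, 4], by decide⟩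
def A₅ : SL(2, ZMod 11) := ⟨!![4, 6; 10, 7], by decide⟩

end PSL2F11

open PSL2F11 ProjectiveSpecialLinearGroup in
/-- `(0; 2, 2, 2, 2, 2)` is a signature of `PSL(2, 𝔽₁₁)`. -/
theorem signature_five_involutions_PSL2_F11 :
    ∃ x₁ x₂ x₃ x₄ x₅ : Matrix.ProjectiveSpecialLinearGroup (Fin 2) (ZMod 11),
      orderOf x₁ = 2 ∧ orderOf x₂ = 2 ∧ orderOf x₃ = 2 ∧ orderOf x₄ = 2 ∧ orderOf x₅ = 2 ∧
      x₁ * x₂ * x₃ * x₄ * x₅ = 1 ∧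
      Subgroup.closure {x₁, x₂, x₃, x₄, x₅} = ⊤ := by
  have : IsSimpleGroup PSL(2, ZMod 11) := rank_two_simple (by rw [Nat.card_zmod]; norm_num)
  refine ⟨A₁, A₂, A₃, A₄, A₅, orderOf_mk_eq_prime Nat.prime_two (by decide) (by decide),
    orderOf_mk_eq_prime Nat.prime_two (by decide) (by decide),
    orderOf_mk_eq_prime Nat.prime_two (by decide) (by decide),
    orderOf_mk_eq_prime Nat.prime_two (by decide) (by decide),
    orderOf_mk_eq_prime Nat.prime_two (by decide) (by decide),
    congrArg QuotientGroup.mk (show A₁ * A₂ * A₃ * A₄ * A₅ = 1 by decide), ?_⟩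
  exact eq_top_of_orderOf_eq_three_five_eleven card_PSL_two_zmod_eleven _
    (a := A₁ * A₄) (b := A₁ * A₂) (c := A₁ * A₂ * A₅ * A₄)
    (mul_mem (subset_closure (by simp)) (subset_closure (by simp)))
    (mul_mem (subset_closure (by simp)) (subset_closure (by simp)))
    (mul_mem (mul_mem (mul_mem (subset_closure (by simp)) (subset_closure (by simp)))
      (subset_closure (by simp))) (subset_closure (by simp)))
    (orderOf_mk_eq_prime Nat.prime_three (by decide) (by decide))
    (orderOf_mk_eq_prime (by norm_num) (by decide) (by decide))
    (orderOf_mk_eq_prime (by norm_num) (by decide) (by decide))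
end
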